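/- arXiv:1902.09695 — 3 statements merged into one kernel-verified Lean document; each statement's English description precedes it below -/
import Mathlib

section
/- Let P ∈ ℝ^{m×m} be symmetric, stochastic, and positive semi-definite, and let Q = I_m − P. Then for all u₁,…,u_m ∈ ℝⁿ, ‖(Q ⊗ I_n)u‖₂² ≤ Σ_{i,j} P_{ij} ‖(Σ_k P_{ik} u_k) − u_j‖₂², where u ∈ ℝ^{mn} is the stacked vector of the u_i. -/
/-!
With `vᵢ = ∑ⱼ Pᵢⱼ uⱼ`, each inner sum on the right is the variance of `u` under the probability
vector `Pᵢ·`, namely `∑ⱼ Pᵢⱼ ‖uⱼ‖² - ‖vᵢ‖²`; since the columns of `P` also sum to one, the right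
side is `∑ ‖uᵢ‖² - ∑ ‖vᵢ‖²`. The left side is `∑ ‖uᵢ‖² - 2 ∑ ⟪uᵢ, vᵢ⟫ + ∑ ‖vᵢ‖²`, so the gap is
`2 ∑ᵢⱼ (P - P²)ᵢⱼ ⟪uᵢ, uⱼ⟫`. Here `P - P² = P (1 - P)` is a product of commuting PSD matrices
(`xᵀ (1 - P) x = ½ ∑ᵢⱼ Pᵢⱼ (xᵢ - xⱼ)²`), and by the Schur product theorem with the Gram matrix
of `u`, `∑ᵢⱼ Aᵢⱼ ⟪uᵢ, uⱼ⟫ ≥ 0` for every PSD `A`.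
-/

open Finset Matrix
open scoped MatrixOrder ComplexOrder RealInnerProductSpace

namespace Matrix

variable {ι : Type*} [Fintype ι]

theorem posSemidef_one_sub_of_mem_doublyStochastic [DecidableEq ι] {P : Matrix ι ι ℝ}
    (hP : P.IsHermitian) (hds : P ∈ doublyStochastic ℝ ι) : (1 - P).PosSemidef := by
  refine .of_dotProduct_mulVec_nonneg (isHermitian_one.sub hP) fun x => ?_
  obtain ⟨hnn, hrow, hcol⟩ := mem_doublyStochastic_iff_sum.1 hds
  have hform : star x ⬝ᵥ (1 - P) *ᵥ x = ∑ i, x i ^ 2 - ∑ i, ∑ j, P i j * (x i * x j) := by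
    rw [sub_mulVec, one_mulVec, dotProduct_sub, star_trivial]
    simp only [dotProduct, mulVec, mul_sum, sq]
    congr 1
    exact sum_congr rfl fun i _ => sum_congr rfl fun j _ => by ring
  have hsq : ∑ i, ∑ j, P i j * (x i - x j) ^ 2 = 2 * (star x ⬝ᵥ (1 - P) *ᵥ x) := by
    have hx : ∀ i j, P i j * (x i - x j) ^ 2
        = P i j * x i ^ 2 - 2 * (P i j * (x i * x j)) + P i j * x j ^ 2 := fun i j => by ring
    simp only [hx, sum_add_distrib, sum_sub_distrib, ← mul_sum, ← sum_mul, hrow, hform]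
    rw [sum_comm (f := fun i j => P i j * x j ^ 2)]
    simp only [← sum_mul, hcol, one_mul]
    ring
  have : 0 ≤ ∑ i, ∑ j, P i j * (x i - x j) ^ 2 :=
    sum_nonneg fun i _ => sum_nonneg fun j _ => mul_nonneg (hnn i j) (sq_nonneg _)
  linarith

theorem posSemidef_sub_mul_self {𝕜 : Type*} [RCLike 𝕜] [DecidableEq ι] {P : Matrix ι ι 𝕜}
    (hP : P.PosSemidef) (hP' : (1 - P).PosSemidef) : (P - P * P).PosSemidef := by
  have := Commute.mul_nonneg hP.nonneg hP'.nonneg ((Commute.one_right P).sub_right (.refl P))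
  rwa [mul_sub, mul_one, nonneg_iff_posSemidef] at this

theorem PosSemidef.sum_mul_inner_nonneg {𝕜 E : Type*} [RCLike 𝕜] [NormedAddCommGroup E]
    [InnerProductSpace 𝕜 E] {A : Matrix ι ι 𝕜} (hA : A.PosSemidef) (u : ι → E) :
    0 ≤ ∑ i, ∑ j, A i j * inner 𝕜 (u i) (u j) := by
  simpa [dotProduct, mulVec, mul_sum] using
    (hA.hadamard (posSemidef_gram 𝕜 u)).dotProduct_mulVec_nonneg 1

variable {E : Type*} [NormedAddCommGroup E] [InnerProductSpace ℝ E]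

theorem sum_inner_sum_smul (A : Matrix ι ι ℝ) (u : ι → E) :
    ∑ i, ⟪u i, ∑ j, A i j • u j⟫ = ∑ i, ∑ j, A i j * ⟪u i, u j⟫ := by
  simp only [inner_sum, real_inner_smul_right]

theorem sum_norm_sum_smul_sq (A : Matrix ι ι ℝ) (u : ι → E) :
    ∑ i, ‖∑ j, A i j • u j‖ ^ 2 = ∑ j, ∑ k, (Aᵀ * A) j k * ⟪u j, u k⟫ := by
  simp only [← real_inner_self_eq_norm_sq]
  simp only [sum_inner, inner_sum, real_inner_smul_left, real_inner_smul_right]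
  simp only [Matrix.mul_apply, transpose_apply, sum_mul]
  rw [sum_comm]
  refine sum_congr rfl fun j _ => ?_
  rw [sum_comm]
  exact sum_congr rfl fun k _ => sum_congr rfl fun i _ => by rw [real_inner_comm]; ring

end Matrix

variable {ι E : Type*} [Fintype ι] [NormedAddCommGroup E] [InnerProductSpace ℝ E]

theorem sum_mul_norm_sum_smul_sub_sq {w : ι → ℝ} (hw : ∑ i, w i = 1) (u : ι → E) :
    ∑ j, w j * ‖(∑ k, w k • u k) - u j‖ ^ 2 = ∑ j, w j * ‖u j‖ ^ 2 - ‖∑ k, w k • u k‖ ^ 2 := by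
  set c := ∑ k, w k • u k
  have hc : ∑ j, w j * ⟪c, u j⟫ = ‖c‖ ^ 2 := by
    simp only [c, ← real_inner_self_eq_norm_sq, inner_sum, real_inner_smul_right]
  simp only [norm_sub_sq_real, mul_add, mul_sub, sum_add_distrib, sum_sub_distrib, ← sum_mul, hw,
    one_mul]
  simp only [mul_left_comm _ (2 : ℝ), ← mul_sum, hc]
  ring

/-- For a symmetric stochastic PSD matrix `P` and `Q = I − P`, the squared
norm `‖(Q ⊗ Iₙ)u‖²` is bounded by the weighted variance
`∑ᵢⱼ Pᵢⱼ ‖(∑ₖ Pᵢₖ uₖ) − uⱼ‖²`. -/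
theorem kron_residual_le_weighted_variance {m n : ℕ}
    (P : Matrix (Fin m) (Fin m) ℝ)
    (hsym : P.IsSymm) (hnn : ∀ i j, 0 ≤ P i j)
    (hrow : ∀ i, ∑ j, P i j = 1) (hpsd : P.PosSemidef)
    (u : Fin m → EuclideanSpace ℝ (Fin n)) :
    ∑ i, ‖u i - ∑ j, P i j • u j‖ ^ 2 ≤
      ∑ i, ∑ j, P i j * ‖(∑ k, P i k • u k) - u j‖ ^ 2 := by
  have hcol (j : Fin m) : ∑ i, P i j = 1 := by simpa only [hsym.apply] using hrow j
  have hds : P ∈ doublyStochastic ℝ (Fin m) := mem_doublyStochastic_iff_sum.2 ⟨hnn, hrow, hcol⟩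
  have hgap : 0 ≤ ∑ i, ∑ j, (P - P * P) i j * ⟪u i, u j⟫ :=
    (posSemidef_sub_mul_self hpsd
      (posSemidef_one_sub_of_mem_doublyStochastic hpsd.isHermitian hds)).sum_mul_inner_nonneg u
  have hlhs : ∑ i, ‖u i - ∑ j, P i j • u j‖ ^ 2 = ∑ i, ‖u i‖ ^ 2
      - 2 * ∑ i, ∑ j, P i j * ⟪u i, u j⟫ + ∑ i, ∑ j, (P * P) i j * ⟪u i, u j⟫ := by
    simp only [norm_sub_sq_real, sum_add_distrib, sum_sub_distrib, ← mul_sum,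
      sum_inner_sum_smul, sum_norm_sum_smul_sq, hsym.eq]
  have hrhs : ∑ i, ∑ j, P i j * ‖(∑ k, P i k • u k) - u j‖ ^ 2
      = ∑ i, ‖u i‖ ^ 2 - ∑ i, ∑ j, (P * P) i j * ⟪u i, u j⟫ := by
    simp only [sum_mul_norm_sum_smul_sub_sq (hrow _), sum_sub_distrib, sum_norm_sum_smul_sq,
      hsym.eq]
    rw [sum_comm]
    simp only [← sum_mul, hcol, one_mul]
  simp only [Matrix.sub_apply, sub_mul, sum_sub_distrib] at hgap
  linarith
end

section
/- Let P ∈ ℝ^{m×m} be symmetric, stochastic, irreducible and positive semi-definite, and Q = I_m − P. Then for all u₁,…,u_m ∈ ℝⁿ and any v₁,…,v_m ∈ ℝⁿ with v_i = argmin over w ∈ ℝⁿ of Σ_j P_{ij}‖w − u_j‖₂² (i.e., v_i = Σ_k P_{ik} u_k), one has σ‖(Q ⊗ I_n)u‖₂² ≤ Σ_{i,j} P_{ij} ‖v_i − u_j‖_p², where σ = min{1, n^{2/p−1}}. -/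
/-!
Fix a coordinate and let `x ∈ ℝᵐ` be the corresponding column of `u`, `y = P x`. The bias–variance
identity and the column sums of `P` give `∑ᵢⱼ Pᵢⱼ (yᵢ - xⱼ)² = ‖x‖² - ‖y‖²`, while
`‖x - y‖² = ‖x‖² - 2⟨x, y⟩ + ‖y‖²`, so the Euclidean inequality is `⟨x, P² x⟩ ≤ ⟨x, P x⟩`, i.e.
`P - P² ⪰ 0`. This follows from `0 ⪯ P ⪯ I` through `P - P² = (I - P) P (I - P) + P (I - P) P`,
and `I - P ⪰ 0` because `⟨z, (I - P) z⟩ = ½ ∑ᵢⱼ Pᵢⱼ (zᵢ - zⱼ)²`. Summing over coordinates and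
comparing norms, `σ ‖w‖₂² ≤ ‖w‖ₚ²` (superadditivity of `t ↦ t^(2/p)` for `p ≤ 2`, the power mean
inequality for `p ≥ 2`), gives the statement.
-/

open Finset Matrix
open scoped ENNReal

/-- The `ℓ_p` norm of a vector in `ℝⁿ`. -/
noncomputable def lpNorm {n : ℕ} (p : ENNReal) [Fact (1 ≤ p)]
    (w : Fin n → ℝ) : ℝ :=
  ‖(WithLp.equiv p (Fin n → ℝ)).symm w‖

theorem Real.sum_rpow_le_rpow_sum {ι : Type*} (s : Finset ι) {a : ι → ℝ}
    (ha : ∀ i ∈ s, 0 ≤ a i) {t : ℝ} (ht : 1 ≤ t) :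
    ∑ i ∈ s, a i ^ t ≤ (∑ i ∈ s, a i) ^ t := by
  induction s using Finset.cons_induction with
  | empty => simp [Real.zero_rpow (by linarith : t ≠ 0)]
  | cons i s hi ih =>
    rw [sum_cons, sum_cons]
    have ha' : ∀ j ∈ s, 0 ≤ a j := fun j hj ↦ ha j (mem_cons_of_mem hj)
    exact (add_le_add le_rfl (ih ha')).trans
      (add_rpow_le_rpow_add (ha i (mem_cons_self i s)) (sum_nonneg ha') ht)

namespace PiLp

variable {ι : Type*} [Fintype ι] {p : ℝ≥0∞}

theorem norm_rpow_eq_sum (hp : 0 < p.toReal) (x : PiLp p (fun _ : ι ↦ ℝ)) :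
    ‖x‖ ^ p.toReal = ∑ i, ‖x i‖ ^ p.toReal := by
  rw [norm_eq_sum hp, ← Real.rpow_mul (sum_nonneg fun i _ ↦ by positivity),
    one_div_mul_cancel hp.ne', Real.rpow_one]

theorem sum_sq_le_norm_sq_of_le_two [Fact (1 ≤ p)] (hp : p ≤ 2) (x : PiLp p (fun _ : ι ↦ ℝ)) :
    ∑ i, x i ^ 2 ≤ ‖x‖ ^ 2 := by
  have hp_top : p ≠ ∞ := ne_top_of_le_ne_top ENNReal.ofNat_ne_top hp
  have hr : 0 < p.toReal := ENNReal.toReal_pos (one_pos.trans_le Fact.out).ne' hp_top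
  have hr2 : p.toReal ≤ 2 := by simpa using ENNReal.toReal_mono ENNReal.ofNat_ne_top hp
  have hsq : ∀ a : ℝ, 0 ≤ a → a ^ 2 = (a ^ p.toReal) ^ (2 / p.toReal) := fun a ha ↦ by
    rw [← Real.rpow_mul ha, mul_div_cancel₀ _ hr.ne', Real.rpow_two]
  calc ∑ i, x i ^ 2 = ∑ i, (‖x i‖ ^ p.toReal) ^ (2 / p.toReal) := by
        simp_rw [← hsq _ (norm_nonneg _), Real.norm_eq_abs, sq_abs]
    _ ≤ (∑ i, ‖x i‖ ^ p.toReal) ^ (2 / p.toReal) :=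
        Real.sum_rpow_le_rpow_sum _ (fun i _ ↦ by positivity) ((one_le_div hr).2 hr2)
    _ = ‖x‖ ^ 2 := by rw [← norm_rpow_eq_sum hr, ← hsq _ (norm_nonneg x)]

theorem sum_sq_le_card_rpow_mul_norm_sq (hp : 2 ≤ p) (x : PiLp p (fun _ : ι ↦ ℝ)) :
    ∑ i, x i ^ 2 ≤ (Fintype.card ι : ℝ) ^ (1 - 2 / p.toReal) * ‖x‖ ^ 2 := by
  have : Fact (1 ≤ p) := ⟨one_le_two.trans hp⟩
  rcases eq_or_ne p ∞ with rfl | hp_top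
  · have hx : ∀ i, x i ^ 2 ≤ ‖x‖ ^ 2 := fun i ↦ by
      rw [← sq_abs, ← Real.norm_eq_abs]
      exact pow_le_pow_left₀ (norm_nonneg _) (norm_apply_le x i) 2
    simpa using sum_le_card_nsmul univ _ _ fun i _ ↦ hx i
  have hr2 : 2 ≤ p.toReal := by simpa using ENNReal.toReal_mono hp_top hp
  have hr : 0 < p.toReal := by linarith
  have hq : 1 ≤ p.toReal / 2 := by linarith
  have hsq : ∀ a : ℝ, 0 ≤ a → (a ^ 2) ^ (p.toReal / 2) = a ^ p.toReal := fun a ha ↦ by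
    rw [← Real.rpow_two, ← Real.rpow_mul ha, mul_div_cancel₀ _ two_ne_zero]
  have hpower_mean := Real.rpow_sum_le_const_mul_sum_rpow_of_nonneg (s := univ)
    (f := fun i ↦ x i ^ 2) hq fun i _ ↦ sq_nonneg _
  rw [← Real.rpow_le_rpow_iff (sum_nonneg fun i _ ↦ sq_nonneg _) (by positivity)
    (by positivity : 0 < p.toReal / 2)]
  refine hpower_mean.trans_eq ?_
  rw [Real.mul_rpow (by positivity) (by positivity), ← Real.rpow_mul (by positivity),
    hsq _ (norm_nonneg x), norm_rpow_eq_sum hr, card_univ]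
  congr 1
  · congr 1; field_simp
  · refine sum_congr rfl fun i _ ↦ ?_
    rw [← hsq _ (norm_nonneg _), Real.norm_eq_abs, sq_abs]

theorem min_one_rpow_mul_sum_sq_le_norm_sq [Fact (1 ≤ p)] (x : PiLp p (fun _ : ι ↦ ℝ)) :
    min 1 ((Fintype.card ι : ℝ) ^ (2 / p.toReal - 1)) * ∑ i, x i ^ 2 ≤ ‖x‖ ^ 2 := by
  have hsum : 0 ≤ ∑ i, x i ^ 2 := sum_nonneg fun i _ ↦ sq_nonneg _
  rcases le_total p 2 with hp | hp
  · exact (mul_le_of_le_one_left hsum (min_le_left _ _)).trans (sum_sq_le_norm_sq_of_le_two hp x)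
  rcases isEmpty_or_nonempty ι with hι | hι
  · simp
  have hcard : (0 : ℝ) < Fintype.card ι := by exact_mod_cast Fintype.card_pos
  calc min 1 ((Fintype.card ι : ℝ) ^ (2 / p.toReal - 1)) * ∑ i, x i ^ 2
      ≤ (Fintype.card ι : ℝ) ^ (2 / p.toReal - 1) * ∑ i, x i ^ 2 := by
        gcongr; exact min_le_right _ _
    _ ≤ (Fintype.card ι : ℝ) ^ (2 / p.toReal - 1)
          * ((Fintype.card ι : ℝ) ^ (1 - 2 / p.toReal) * ‖x‖ ^ 2) := by
        gcongr; exact sum_sq_le_card_rpow_mul_norm_sq hp x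
    _ = ‖x‖ ^ 2 := by rw [← mul_assoc, ← Real.rpow_add hcard]; simp

end PiLp

namespace Matrix

variable {ι : Type*} [Fintype ι]

theorem PosSemidef.sub_mul_self {R : Type*} [Ring R] [PartialOrder R] [StarRing R]
    [AddLeftMono R] [DecidableEq ι] {P : Matrix ι ι R} (hP : P.PosSemidef)
    (h1P : (1 - P).PosSemidef) : (P - P * P).PosSemidef := by
  have hdecomp : P - P * P = (1 - P)ᴴ * P * (1 - P) + Pᴴ * (1 - P) * P := by
    rw [hP.isHermitian.eq, h1P.isHermitian.eq]
    noncomm_ring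
  rw [hdecomp]
  exact (hP.conjTranspose_mul_mul_same _).add (h1P.conjTranspose_mul_mul_same _)

theorem sum_mul_mulVec_sub_sq {P : Matrix ι ι ℝ} (hrow : ∀ i, ∑ j, P i j = 1)
    (x : ι → ℝ) (i : ι) :
    ∑ j, P i j * ((P *ᵥ x) i - x j) ^ 2 = ∑ j, P i j * x j ^ 2 - (P *ᵥ x) i ^ 2 := by
  have hPx : (P *ᵥ x) i = ∑ j, P i j * x j := rfl
  calc ∑ j, P i j * ((P *ᵥ x) i - x j) ^ 2
      = (∑ j, P i j) * (P *ᵥ x) i ^ 2 - 2 * (P *ᵥ x) i * ∑ j, P i j * x j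
          + ∑ j, P i j * x j ^ 2 := by
        simp only [sum_mul, mul_sum, ← sum_sub_distrib, ← sum_add_distrib]
        exact sum_congr rfl fun j _ ↦ by ring
    _ = ∑ j, P i j * x j ^ 2 - (P *ᵥ x) i ^ 2 := by rw [hrow, ← hPx]; ring

theorem sum_mul_sub_sq_eq_two_mul_sub_dotProduct_mulVec {P : Matrix ι ι ℝ}
    (hsym : P.IsSymm) (hrow : ∀ i, ∑ j, P i j = 1) (x : ι → ℝ) :
    ∑ i, ∑ j, P i j * (x i - x j) ^ 2 = 2 * (x ⬝ᵥ x - x ⬝ᵥ (P *ᵥ x)) := by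
  have hcol : ∀ j, ∑ i, P i j = 1 := fun j ↦ by simpa only [hsym.apply] using hrow j
  have hrow' : ∑ i, ∑ j, P i j * x i ^ 2 = x ⬝ᵥ x := by
    simp only [← sum_mul, hrow, one_mul, dotProduct, sq]
  have hcol' : ∑ i, ∑ j, P i j * x j ^ 2 = x ⬝ᵥ x := by
    rw [sum_comm]; simp only [← sum_mul, hcol, one_mul, dotProduct, sq]
  have hcross : ∑ i, ∑ j, P i j * (x i * x j) = x ⬝ᵥ (P *ᵥ x) := by
    simp only [dotProduct, mulVec, mul_sum]
    exact sum_congr rfl fun i _ ↦ sum_congr rfl fun j _ ↦ by ring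
  calc ∑ i, ∑ j, P i j * (x i - x j) ^ 2
      = ∑ i, ∑ j, P i j * x i ^ 2 + ∑ i, ∑ j, P i j * x j ^ 2
          - 2 * ∑ i, ∑ j, P i j * (x i * x j) := by
        simp only [mul_sum, ← sum_add_distrib, ← sum_sub_distrib]
        exact sum_congr rfl fun i _ ↦ sum_congr rfl fun j _ ↦ by ring
    _ = 2 * (x ⬝ᵥ x - x ⬝ᵥ (P *ᵥ x)) := by rw [hrow', hcol', hcross]; ring

theorem posSemidef_one_sub_of_isSymm [DecidableEq ι] {P : Matrix ι ι ℝ} (hsym : P.IsSymm)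
    (hnn : ∀ i j, 0 ≤ P i j) (hrow : ∀ i, ∑ j, P i j = 1) : (1 - P).PosSemidef := by
  refine .of_dotProduct_mulVec_nonneg (isHermitian_one.sub ?_) fun x ↦ ?_
  · exact isHermitian_iff_isSelfAdjoint.mpr hsym
  · have hform := sum_mul_sub_sq_eq_two_mul_sub_dotProduct_mulVec hsym hrow x
    have hnonneg : 0 ≤ ∑ i, ∑ j, P i j * (x i - x j) ^ 2 :=
      sum_nonneg fun i _ ↦ sum_nonneg fun j _ ↦ mul_nonneg (hnn i j) (sq_nonneg _)
    simp only [star_trivial, sub_mulVec, one_mulVec, dotProduct_sub]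
    linarith

theorem sum_sub_mulVec_sq_le {P : Matrix ι ι ℝ} (hsym : P.IsSymm) (hnn : ∀ i j, 0 ≤ P i j)
    (hrow : ∀ i, ∑ j, P i j = 1) (hpsd : P.PosSemidef) (x : ι → ℝ) :
    ∑ i, (x i - (P *ᵥ x) i) ^ 2 ≤ ∑ i, ∑ j, P i j * ((P *ᵥ x) i - x j) ^ 2 := by
  classical
  have hcol : ∀ j, ∑ i, P i j = 1 := fun j ↦ by simpa only [hsym.apply] using hrow j
  have hcontract : (P *ᵥ x) ⬝ᵥ (P *ᵥ x) ≤ x ⬝ᵥ (P *ᵥ x) := by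
    have h := (hpsd.sub_mul_self (posSemidef_one_sub_of_isSymm hsym hnn hrow))
      |>.dotProduct_mulVec_nonneg x
    rw [star_trivial, sub_mulVec, ← mulVec_mulVec, dotProduct_sub,
      dotProduct_mulVec x P (P *ᵥ x), ← mulVec_transpose, hsym.eq] at h
    linarith
  have hvariance : ∑ i, ∑ j, P i j * ((P *ᵥ x) i - x j) ^ 2
      = x ⬝ᵥ x - (P *ᵥ x) ⬝ᵥ (P *ᵥ x) := by
    rw [sum_congr rfl fun i _ ↦ sum_mul_mulVec_sub_sq hrow x i, sum_sub_distrib, sum_comm]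
    simp only [← sum_mul, hcol, one_mul, dotProduct, sq]
  have hexpand : ∑ i, (x i - (P *ᵥ x) i) ^ 2
      = x ⬝ᵥ x - 2 * x ⬝ᵥ (P *ᵥ x) + (P *ᵥ x) ⬝ᵥ (P *ᵥ x) := by
    simp only [dotProduct, mul_sum, ← sum_add_distrib, ← sum_sub_distrib]
    exact sum_congr rfl fun i _ ↦ by ring
  rw [hvariance, hexpand]
  linarith

end Matrix

theorem kron_residual_le_weighted_lp_variance_general {m n : ℕ}
    (p : ENNReal) [Fact (1 ≤ p)]
    (P : Matrix (Fin m) (Fin m) ℝ)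
    (hsym : P.IsSymm) (hnn : ∀ i j, 0 ≤ P i j)
    (hrow : ∀ i, ∑ j, P i j = 1) (hpsd : P.PosSemidef)
    (u v : Fin m → (Fin n → ℝ))
    (hv : ∀ i, v i = ∑ k, P i k • u k) :
    min 1 ((n : ℝ) ^ (2 / p.toReal - 1)) *
        ∑ i, ∑ l, (u i l - (∑ j, P i j • u j) l) ^ 2 ≤
      ∑ i, ∑ j, P i j * lpNorm p (v i - u j) ^ 2 := by
  set σ := min 1 ((n : ℝ) ^ (2 / p.toReal - 1))
  set y : Fin n → Fin m → ℝ := fun l ↦ P *ᵥ fun k ↦ u k l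
  have hy : ∀ i l, (∑ j, P i j • u j) l = y l i := fun i l ↦ by
    simp [y, mulVec, dotProduct]
  have hnorm : ∀ i j, σ * ∑ l, (y l i - u j l) ^ 2 ≤ lpNorm p (v i - u j) ^ 2 := fun i j ↦ by
    simpa [σ, lpNorm, hv, hy] using
      PiLp.min_one_rpow_mul_sum_sq_le_norm_sq (WithLp.toLp p (v i - u j))
  calc σ * ∑ i, ∑ l, (u i l - (∑ j, P i j • u j) l) ^ 2
      = σ * ∑ l, ∑ i, (u i l - y l i) ^ 2 := by simp_rw [hy]; rw [sum_comm]
    _ ≤ σ * ∑ l, ∑ i, ∑ j, P i j * (y l i - u j l) ^ 2 := by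
        refine mul_le_mul_of_nonneg_left (sum_le_sum fun l _ ↦ ?_) (by positivity)
        exact sum_sub_mulVec_sq_le hsym hnn hrow hpsd _
    _ = ∑ i, ∑ j, P i j * (σ * ∑ l, (y l i - u j l) ^ 2) := by
        simp only [mul_sum]
        rw [sum_comm]
        refine sum_congr rfl fun i _ ↦ ?_
        rw [sum_comm]
        exact sum_congr rfl fun j _ ↦ sum_congr rfl fun l _ ↦ by ring
    _ ≤ ∑ i, ∑ j, P i j * lpNorm p (v i - u j) ^ 2 := by
        gcongr with i _ j _
        · exact hnn i j
        · exact hnorm i j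

/-- For a symmetric, stochastic, irreducible, PSD matrix `P` and `Q = I − P`,
with `vᵢ = ∑ₖ Pᵢₖ uₖ` (the minimizer of `w ↦ ∑ⱼ Pᵢⱼ‖w − uⱼ‖₂²`),
`σ‖(Q ⊗ Iₙ)u‖₂² ≤ ∑ᵢⱼ Pᵢⱼ ‖vᵢ − uⱼ‖ₚ²` where `σ = min{1, n^{2/p−1}}`. -/
theorem kron_residual_le_weighted_lp_variance {m n : ℕ}
    (p : ENNReal) [Fact (1 ≤ p)]
    (P : Matrix (Fin m) (Fin m) ℝ)
    (hsym : P.IsSymm) (hnn : ∀ i j, 0 ≤ P i j)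
    (hrow : ∀ i, ∑ j, P i j = 1) (hpsd : P.PosSemidef)
    (hirr : ∀ i j, ∃ k : ℕ, 0 < (P ^ k) i j)
    (u v : Fin m → (Fin n → ℝ))
    (hv : ∀ i, v i = ∑ k, P i k • u k) :
    min 1 ((n : ℝ) ^ (2 / p.toReal - 1)) *
        ∑ i, ∑ l, (u i l - (∑ j, P i j • u j) l) ^ 2 ≤
      ∑ i, ∑ j, P i j * lpNorm p (v i - u j) ^ 2 :=
  kron_residual_le_weighted_lp_variance_general p P hsym hnn hrow hpsd u v hv
end

section
/- Let X ⊆ ℝⁿ be a closed convex set contained in the closure of a convex open set D, let φ : D → ℝ be differentiable and strictly convex, and let P ∈ ℝ^{m×m} be a symmetric stochastic matrix. Fix x₁,…,x_m ∈ X ∩ D and for each i let y_i = argmin_{y ∈ X ∩ D} Σ_j P_{ij} B_φ(y, x_j). Then for any u ∈ X ∩ D: Σ_i (B_φ(u, x_i) − B_φ(u, y_i)) ≥ Σ_{i,j} P_{ij} B_φ(y_i, x_j). -/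
/-!
The three-point identity gives
`B(u, xⱼ) - B(u, yᵢ) - B(yᵢ, xⱼ) = ⟪∇φ(yᵢ) - ∇φ(xⱼ), u - yᵢ⟫`, and the first-order optimality
condition of `yᵢ` makes the `Pᵢ`-weighted sum of the right-hand sides nonnegative. A symmetric
matrix with unit row sums is doubly stochastic, so `∑ᵢⱼ Pᵢⱼ (B(u, xⱼ) - B(u, yᵢ))` collapses to
`∑ᵢ (B(u, xᵢ) - B(u, yᵢ))`.
-/

open RealInnerProductSpace

/-- Bregman divergence of `φ` with gradient map `gφ`. -/
noncomputable def bregman {n : ℕ} (φ : EuclideanSpace ℝ (Fin n) → ℝ)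
    (gφ : EuclideanSpace ℝ (Fin n) → EuclideanSpace ℝ (Fin n))
    (u v : EuclideanSpace ℝ (Fin n)) : ℝ :=
  φ u - φ v - ⟪gφ v, u - v⟫

theorem IsMinOn.inner_gradient_sub_nonneg {F : Type*} [NormedAddCommGroup F]
    [InnerProductSpace ℝ F] [CompleteSpace F] {f : F → ℝ} {g : F} {s : Set F} {y u : F}
    (hmin : IsMinOn f s y) (hf : HasGradientAt f g y) (hs : Convex ℝ s) (hy : y ∈ s)
    (hu : u ∈ s) : 0 ≤ ⟪g, u - y⟫ := by
  simpa using hmin.localize.hasFDerivWithinAt_nonneg hf.hasFDerivAt.hasFDerivWithinAt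
    (sub_mem_posTangentConeAt_of_segment_subset (hs.segment_subset hy hu))

section Bregman

variable {n : ℕ} {φ : EuclideanSpace ℝ (Fin n) → ℝ}
  {gφ : EuclideanSpace ℝ (Fin n) → EuclideanSpace ℝ (Fin n)}

theorem bregman_three_point (u v w : EuclideanSpace ℝ (Fin n)) :
    bregman φ gφ u w - bregman φ gφ u v - bregman φ gφ v w = ⟪gφ v - gφ w, u - v⟫ := by
  simp only [bregman, inner_sub_left, inner_sub_right]
  ring

theorem hasGradientAt_bregman_left {z : EuclideanSpace ℝ (Fin n)}
    (hφ : HasGradientAt φ (gφ z) z) (v : EuclideanSpace ℝ (Fin n)) :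
    HasGradientAt (fun w => bregman φ gφ w v) (gφ z - gφ v) z := by
  rw [hasGradientAt_iff_hasFDerivAt, map_sub]
  exact (hφ.hasFDerivAt.sub_const _).sub
    ((innerSL ℝ (gφ v)).hasFDerivAt.sub_const ⟪gφ v, v⟫) |>.congr_of_eventuallyEq
    (Filter.Eventually.of_forall fun w => by
      simp only [bregman, inner_sub_right, coe_innerSL_apply, Pi.sub_apply]
      ring)

theorem hasGradientAt_sum_mul_bregman_left {ι : Type*} (t : Finset ι) (c : ι → ℝ)
    (x : ι → EuclideanSpace ℝ (Fin n)) {z : EuclideanSpace ℝ (Fin n)}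
    (hφ : HasGradientAt φ (gφ z) z) :
    HasGradientAt (fun w => ∑ j ∈ t, c j * bregman φ gφ w (x j))
      (∑ j ∈ t, c j • (gφ z - gφ (x j))) z := by
  rw [hasGradientAt_iff_hasFDerivAt, map_sum]
  simp only [map_smul]
  exact HasFDerivAt.fun_sum fun j _ =>
    ((hasGradientAt_bregman_left hφ (x j)).hasFDerivAt.const_smul (c j))

theorem sum_mul_inner_nonneg_of_isMinOn_sum_mul_bregman {ι : Type*} (t : Finset ι) (c : ι → ℝ)
    (x : ι → EuclideanSpace ℝ (Fin n)) {s : Set (EuclideanSpace ℝ (Fin n))}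
    {y u : EuclideanSpace ℝ (Fin n)}
    (hs : Convex ℝ s) (hy : y ∈ s) (hu : u ∈ s) (hφ : HasGradientAt φ (gφ y) y)
    (hmin : IsMinOn (fun w => ∑ j ∈ t, c j * bregman φ gφ w (x j)) s y) :
    0 ≤ ∑ j ∈ t, c j * ⟪gφ y - gφ (x j), u - y⟫ := by
  simpa only [sum_inner, real_inner_smul_left] using
    hmin.inner_gradient_sub_nonneg (hasGradientAt_sum_mul_bregman_left t c x hφ) hs hy hu

end Bregman

theorem Matrix.sum_sub_eq_sum_sum_mul_sub_of_isSymm {ι : Type*} [Fintype ι]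
    {P : Matrix ι ι ℝ} (hsym : P.IsSymm) (hrow : ∀ i, ∑ j, P i j = 1) (a b : ι → ℝ) :
    ∑ i, (a i - b i) = ∑ i, ∑ j, P i j * (a j - b i) := by
  have hcol : ∀ j, ∑ i, P i j = 1 := fun j => by
    simpa only [← hsym.apply] using hrow j
  simp only [mul_sub, Finset.sum_sub_distrib, ← Finset.sum_mul, hrow, one_mul]
  rw [Finset.sum_comm]
  simp only [← Finset.sum_mul, hcol, one_mul]

theorem bregman_mirror_averaging_sum_general {m n : ℕ}
    (D X : Set (EuclideanSpace ℝ (Fin n)))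
    (hDconv : Convex ℝ D)
    (hXconv : Convex ℝ X)
    (φ : EuclideanSpace ℝ (Fin n) → ℝ)
    (gφ : EuclideanSpace ℝ (Fin n) → EuclideanSpace ℝ (Fin n))
    (hgrad : ∀ x ∈ D, HasGradientAt φ (gφ x) x)
    (P : Matrix (Fin m) (Fin m) ℝ)
    (hsym : P.IsSymm) (hrow : ∀ i, ∑ j, P i j = 1)
    (x y : Fin m → EuclideanSpace ℝ (Fin n))
    (hy : ∀ i, y i ∈ X ∩ D)
    (hmin : ∀ i, ∀ z ∈ X ∩ D,
      ∑ j, P i j * bregman φ gφ (y i) (x j) ≤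
        ∑ j, P i j * bregman φ gφ z (x j)) :
    ∀ u ∈ X ∩ D,
      ∑ i, (bregman φ gφ u (x i) - bregman φ gφ u (y i)) ≥
        ∑ i, ∑ j, P i j * bregman φ gφ (y i) (x j) := by
  intro u hu
  have hopt : ∀ i, 0 ≤ ∑ j, P i j * ⟪gφ (y i) - gφ (x j), u - y i⟫ := fun i =>
    sum_mul_inner_nonneg_of_isMinOn_sum_mul_bregman _ _ x (hXconv.inter hDconv) (hy i) hu
      (hgrad _ (hy i).2) (hmin i)
  calc ∑ i, ∑ j, P i j * bregman φ gφ (y i) (x j)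
      ≤ ∑ i, ∑ j, P i j * (bregman φ gφ (y i) (x j) + ⟪gφ (y i) - gφ (x j), u - y i⟫) := by
        simp only [mul_add, Finset.sum_add_distrib]
        linarith [Finset.sum_nonneg fun i (_ : i ∈ Finset.univ) => hopt i]
    _ = ∑ i, (bregman φ gφ u (x i) - bregman φ gφ u (y i)) := by
        rw [Matrix.sum_sub_eq_sum_sum_mul_sub_of_isSymm hsym hrow]
        simp only [← bregman_three_point (φ := φ), add_sub_cancel]

/-- Generalized Pythagorean inequality for Bregman projections (mirror
averaging step): summing over all nodes. -/
theorem bregman_mirror_averaging_sum {m n : ℕ}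
    (D X : Set (EuclideanSpace ℝ (Fin n)))
    (hDconv : Convex ℝ D) (hDopen : IsOpen D)
    (hXconv : Convex ℝ X) (hXclosed : IsClosed X) (hXD : X ⊆ closure D)
    (φ : EuclideanSpace ℝ (Fin n) → ℝ)
    (gφ : EuclideanSpace ℝ (Fin n) → EuclideanSpace ℝ (Fin n))
    (hgrad : ∀ x ∈ D, HasGradientAt φ (gφ x) x)
    (hconv : StrictConvexOn ℝ D φ)
    (P : Matrix (Fin m) (Fin m) ℝ)
    (hsym : P.IsSymm) (hnn : ∀ i j, 0 ≤ P i j) (hrow : ∀ i, ∑ j, P i j = 1)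
    (x y : Fin m → EuclideanSpace ℝ (Fin n))
    (hx : ∀ i, x i ∈ X ∩ D) (hy : ∀ i, y i ∈ X ∩ D)
    (hmin : ∀ i, ∀ z ∈ X ∩ D,
      ∑ j, P i j * bregman φ gφ (y i) (x j) ≤
        ∑ j, P i j * bregman φ gφ z (x j)) :
    ∀ u ∈ X ∩ D,
      ∑ i, (bregman φ gφ u (x i) - bregman φ gφ u (y i)) ≥
        ∑ i, ∑ j, P i j * bregman φ gφ (y i) (x j) :=
  bregman_mirror_averaging_sum_general D X hDconv hXconv φ gφ hgrad P hsym hrow x y hy hmin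
end
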